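/- Let (s_n)_{n ≥ 1} be a weakly decreasing sequence of nonnegative real numbers and A > 0 a constant such that s_n ≤ A/√n for all n ≥ 1 and liminf_{n→∞} (s_1 + ⋯ + s_n)/√n ≥ 2A. Then lim_{n→∞} √n · s_n = A. -/

import Mathlib

/-!
With `S n = s 1 + ⋯ + s n`, summing `s k ≤ A / √k` gives `S n ≤ 2 A √n`. As `s` is antitone,
for `N = n + m` with `m ≥ t n` the liminf hypothesis gives, for large `n`,
`m s n ≥ S N - S n ≥ (2A - o(1)) √((1 + t) n) - 2 A √n`, hence
`liminf √n s n ≥ 2A (√(1 + t) - 1) / t`, and this tends to `A` as `t → 0⁺` because `√` has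
derivative `1/2` at `1`. The bound `√n s n ≤ A` is the hypothesis itself.
-/

open Filter Finset Real Set Topology

lemma inv_sqrt_add_one_le_two_mul_sub_sqrt {x : ℝ} (hx : 0 ≤ x) :
    (√(x + 1))⁻¹ ≤ 2 * (√(x + 1) - √x) := by
  have hpos : 0 < √(x + 1) := sqrt_pos.2 (by linarith)
  have hsq : √(x + 1) ^ 2 = x + 1 := sq_sqrt (by linarith)
  have hsq' : √x ^ 2 = x := sq_sqrt hx
  rw [inv_le_iff_one_le_mul₀' hpos]
  nlinarith [sq_nonneg (√(x + 1) - √x), sqrt_nonneg x]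

section

variable {s : ℕ → ℝ} {A : ℝ}

lemma sum_range_succ_le_two_mul_sqrt (hA : 0 ≤ A) (hbound : ∀ n, 1 ≤ n → s n ≤ A / √n)
    (n : ℕ) : ∑ k ∈ range n, s (k + 1) ≤ 2 * A * √n := by
  induction n with
  | zero => simp
  | succ n ih =>
    have hstep : A / √(n + 1) ≤ 2 * A * (√(n + 1) - √n) := by
      have := mul_le_mul_of_nonneg_left (inv_sqrt_add_one_le_two_mul_sub_sqrt n.cast_nonneg) hA
      rw [div_eq_mul_inv]
      linarith
    have hlast := hbound (n + 1) n.succ_pos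
    push_cast at hlast ⊢
    rw [sum_range_succ]
    linarith

lemma sum_range_add_le (hmono : AntitoneOn s (Ici 1)) {n : ℕ} (hn : 1 ≤ n) (m : ℕ) :
    ∑ k ∈ range (n + m), s (k + 1) ≤ ∑ k ∈ range n, s (k + 1) + m * s n := by
  rw [sum_range_add]
  have htail : ∑ k ∈ range m, s (n + k + 1) ≤ #(range m) • s n :=
    sum_le_card_nsmul _ _ _ fun k _ => hmono hn (by simp) (by omega)
  rw [card_range, nsmul_eq_mul] at htail
  linarith

lemma mul_div_le_sqrt_mul (hA : 0 ≤ A) (hmono : AntitoneOn s (Ici 1))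
    (hbound : ∀ n, 1 ≤ n → s n ≤ A / √n) {n m : ℕ} {b c : ℝ} (hn : 1 ≤ n) (hm : 0 < m)
    (hb : 0 ≤ b) (hc : c * n ≤ n + m) (hS : b * √(n + m : ℕ) ≤ ∑ k ∈ range (n + m), s (k + 1)) :
    (b * √c - 2 * A) * (n / m) ≤ √n * s n := by
  have hsqrt : √c * √n ≤ √(n + m : ℕ) := by
    rw [← sqrt_mul' c n.cast_nonneg]
    exact sqrt_le_sqrt (by push_cast; exact hc)
  have hgain : (b * √c - 2 * A) * √n ≤ m * s n := by
    have := sum_range_add_le hmono hn m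
    have := sum_range_succ_le_two_mul_sqrt hA hbound n
    nlinarith [mul_le_mul_of_nonneg_left hsqrt hb]
  have hm' : (0 : ℝ) < m := by exact_mod_cast hm
  calc (b * √c - 2 * A) * (n / m) = (b * √c - 2 * A) * √n * √n / m := by
        rw [mul_assoc, mul_self_sqrt n.cast_nonneg, mul_div_assoc]
    _ ≤ m * s n * √n / m := by gcongr
    _ = √n * s n := by field_simp

lemma eventually_mul_sqrt_le_of_lt_liminf {u : ℕ → ℝ} {b : ℝ} (hu : ∀ N, 0 ≤ u N)
    (h : b < liminf (fun N : ℕ => u N / √N) atTop) : ∀ᶠ N : ℕ in atTop, b * √N ≤ u N := by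
  have hbdd : IsBoundedUnder (· ≥ ·) atTop (fun N : ℕ => u N / √N) :=
    isBoundedUnder_of ⟨0, fun N => div_nonneg (hu N) (sqrt_nonneg _)⟩
  filter_upwards [eventually_lt_of_lt_liminf h hbdd, eventually_ge_atTop 1] with N hN hN1
  exact ((lt_div_iff₀ (sqrt_pos.2 (by exact_mod_cast hN1))).1 hN).le

lemma tendsto_natCast_div_natCeil_mul {t : ℝ} (ht : 0 < t) :
    Tendsto (fun n : ℕ => (n : ℝ) / ⌈t * n⌉₊) atTop (𝓝 t⁻¹) := by
  have hceil : Tendsto (fun n : ℕ => (⌈t * n⌉₊ : ℝ) / (t * n)) atTop (𝓝 1) :=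
    tendsto_nat_ceil_div_atTop.comp
      (tendsto_natCast_atTop_atTop.const_mul_atTop ht)
  have := (hceil.inv₀ one_ne_zero).const_mul t⁻¹
  simp only [inv_one, mul_one] at this
  refine this.congr' ?_
  filter_upwards [eventually_ge_atTop 1] with n hn
  have : (n : ℝ) ≠ 0 := by positivity
  field_simp

lemma eventually_lt_sqrt_mul (hA : 0 ≤ A) (hmono : AntitoneOn s (Ici 1))
    (hbound : ∀ n, 1 ≤ n → s n ≤ A / √n) {a b t : ℝ} (ht : 0 < t) (hb : 0 ≤ b)
    (hS : ∀ᶠ N : ℕ in atTop, b * √N ≤ ∑ k ∈ range N, s (k + 1))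
    (ha : a < (b * √(1 + t) - 2 * A) / t) : ∀ᶠ n : ℕ in atTop, a < √n * s n := by
  have hlim := (tendsto_natCast_div_natCeil_mul ht).const_mul (b * √(1 + t) - 2 * A)
  rw [← div_eq_mul_inv] at hlim
  obtain ⟨N₀, hN₀⟩ := eventually_atTop.1 hS
  filter_upwards [hlim.eventually (eventually_gt_nhds ha), eventually_ge_atTop (max 1 N₀)]
    with n hlt hn
  have hn1 : 1 ≤ n := le_of_max_le_left hn
  have hm : 0 < ⌈t * n⌉₊ := Nat.ceil_pos.2 (mul_pos ht (by exact_mod_cast hn1))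
  refine hlt.trans_le (mul_div_le_sqrt_mul hA hmono hbound hn1 hm hb ?_ (hN₀ _ (by omega)))
  linarith [Nat.le_ceil (t * n)]

lemma exists_lt_sub_div (hA : 0 < A) {a : ℝ} (ha : a < A) :
    ∃ t > 0, ∃ b, 0 ≤ b ∧ b < 2 * A ∧ a < (b * √(1 + t) - 2 * A) / t := by
  have hslope := (hasDerivAt_sqrt one_ne_zero).tendsto_slope_zero_right
  simp only [sqrt_one, smul_eq_mul] at hslope
  have hlim : Tendsto (fun t => (2 * A * √(1 + t) - 2 * A) / t) (𝓝[>] 0) (𝓝 A) := by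
    convert hslope.const_mul (2 * A) using 1
    · ext t
      ring
    · simp [field]
  obtain ⟨t, hat, ht⟩ := ((hlim.eventually (eventually_gt_nhds ha)).and self_mem_nhdsWithin).exists
  have hcont : Continuous fun b : ℝ => (b * √(1 + t) - 2 * A) / t := by fun_prop
  obtain ⟨b, hab, hb⟩ := (((hcont.tendsto (2 * A)).mono_left nhdsWithin_le_nhds).eventually
    (eventually_gt_nhds hat) |>.and (Ioo_mem_nhdsLT (by linarith : 0 < 2 * A))).exists
  exact ⟨t, ht, b, hb.1.le, hb.2, hab⟩

end

/-- Let `(s_n)_{n ≥ 1}` be a weakly decreasing sequence of nonnegative reals and `A > 0` with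
`s_n ≤ A/√n` for all `n ≥ 1` and `liminf (s_1 + ⋯ + s_n)/√n ≥ 2A`. Then `√n · s_n → A`.
(Here `s_1 + ⋯ + s_n = ∑_{m ∈ range n} s (m+1)`.) -/
theorem tendsto_sqrt_mul_of_antitone (s : ℕ → ℝ) (A : ℝ) (hA : 0 < A)
    (hnonneg : ∀ n, 1 ≤ n → 0 ≤ s n)
    (hmono : ∀ m n, 1 ≤ m → m ≤ n → s n ≤ s m)
    (hbound : ∀ n, 1 ≤ n → s n ≤ A / Real.sqrt n)
    (hliminf : 2 * A ≤
      Filter.liminf (fun n : ℕ => (∑ m ∈ Finset.range n, s (m + 1)) / Real.sqrt n) atTop) :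
    Tendsto (fun n : ℕ => Real.sqrt n * s n) atTop (nhds A) := by
  have hanti : AntitoneOn s (Ici 1) := fun m hm n _ hmn => hmono m n hm hmn
  refine tendsto_order.2 ⟨fun a ha => ?_, fun a ha => ?_⟩
  · obtain ⟨t, ht, b, hb0, hb, hab⟩ := exists_lt_sub_div hA ha
    have hS := eventually_mul_sqrt_le_of_lt_liminf
      (fun N => sum_nonneg fun k _ => hnonneg (k + 1) k.succ_pos) (hb.trans_le hliminf)
    exact eventually_lt_sqrt_mul hA.le hanti hbound ht hb0 hS hab
  · filter_upwards [eventually_ge_atTop 1] with n hn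
    have hle := hbound n hn
    rw [le_div_iff₀' (sqrt_pos.2 (by exact_mod_cast hn))] at hle
    exact hle.trans_lt ha
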